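/- arXiv:2412.09411 — 12 statements merged into one kernel-verified Lean document; each statement's English description precedes it below -/
import Mathlib

section
/- If L is a letter-Cartesian language (i.e., for every letter x and words α, β, γ, δ, if αxβ ∈ L and γxδ ∈ L then αxδ ∈ L), then the reduced language red(L) = {α ∈ L | no strict infix of α is in L} is also letter-Cartesian. -/
def StrictInfix {A : Type*} (u w : List A) : Prop :=
  ∃ s t : List A, w = s ++ u ++ t ∧ s ++ t ≠ []

def red {A : Type*} (L : Set (List A)) : Set (List A) :=
  {w ∈ L | ∀ u, StrictInfix u w → u ∉ L}

def LetterCartesian {A : Type*} (L : Set (List A)) : Prop :=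
  ∀ (x : A) (α β γ δ : List A),
    α ++ [x] ++ β ∈ L → γ ++ [x] ++ δ ∈ L → α ++ [x] ++ δ ∈ L

/-!
Let `αxβ` and `γxδ` be reduced words of `L`; their cross product `αxδ` lies in `L`. A member `u` of `L`
that is an infix of `αxδ` either avoids the marked letter, and is then a strict infix of `αxβ` or of
`γxδ`, or it reads `α'xδ'` with `α'` a suffix of `α` and `δ'` a prefix of `δ`. Crossing `u` with the two
given words puts `α'xβ` and `γxδ'` in `L`; as infixes of the reduced words `αxβ` and `γxδ` they must
equal them, so `α' = α`, `δ' = δ` and `u = αxδ`.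
-/

open List

section

variable {A : Type*}

theorem strictInfix_iff {u w : List A} : StrictInfix u w ↔ u <:+: w ∧ u ≠ w := by
  constructor
  · rintro ⟨s, t, rfl, hst⟩
    refine ⟨infix_append s u t, fun hu => hst ?_⟩
    have := congrArg length hu
    simp only [length_append] at this
    rw [← length_eq_zero_iff, length_append]
    omega
  · rintro ⟨⟨s, t, rfl⟩, hne⟩
    refine ⟨s, t, rfl, fun hst => hne ?_⟩
    obtain ⟨rfl, rfl⟩ := append_eq_nil_iff.mp hst
    simp

theorem mem_red_iff {L : Set (List A)} {w : List A} :
    w ∈ red L ↔ w ∈ L ∧ ∀ u ∈ L, u <:+: w → u = w := by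
  simp only [red, Set.mem_ofPred_eq, strictInfix_iff]
  grind

theorem List.IsInfix.of_append_singleton_append {u α δ : List A} {x : A}
    (h : u <:+: α ++ [x] ++ δ) :
    u <:+: α ∨ u <:+: δ ∨ ∃ α' δ', α' <:+ α ∧ δ' <+: δ ∧ u = α' ++ [x] ++ δ' := by
  rw [append_assoc, singleton_append, infix_append_iff, infix_cons_iff] at h
  rcases h with hα | (hpre | hδ) | ⟨α', l, rfl, hα', hpre⟩
  · exact .inl hα
  · rcases prefix_cons_iff.mp hpre with rfl | ⟨δ', rfl, hδ'⟩
    · exact .inl nil_infix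
    · exact .inr (.inr ⟨[], δ', nil_suffix, hδ', by simp⟩)
  · exact .inr (.inl hδ)
  · rcases prefix_cons_iff.mp hpre with rfl | ⟨δ', rfl, hδ'⟩
    · exact .inl (by simpa using hα'.isInfix)
    · exact .inr (.inr ⟨α', δ', hα', hδ', by simp⟩)

end

theorem red_letterCartesian {A : Type*} (L : Set (List A))
    (h : LetterCartesian L) : LetterCartesian (red L) := by
  intro x α β γ δ hαβ hγδ
  rw [mem_red_iff] at hαβ hγδ ⊢
  refine ⟨h x α β γ δ hαβ.1 hγδ.1, fun u hu hinf => ?_⟩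
  rcases hinf.of_append_singleton_append with hα | hδ | ⟨α', δ', hα', hδ', rfl⟩
  · refine absurd (hαβ.2 u hu (hα.trans (infix_append_left.trans infix_append_left)))
      (ne_of_apply_ne length ?_)
    have := hα.length_le
    simp only [length_append, length_singleton]
    omega
  · refine absurd (hγδ.2 u hu (hδ.trans infix_append_right)) (ne_of_apply_ne length ?_)
    have := hδ.length_le
    simp only [length_append, length_singleton]
    omega
  · have hα'_eq : α' ++ [x] ++ β = α ++ [x] ++ β :=
      hαβ.2 _ (h x α' δ' α β hu hαβ.1) (by simpa using (suffix_append_self_iff.mpr hα').isInfix)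
    have hδ'_eq : γ ++ [x] ++ δ' = γ ++ [x] ++ δ :=
      hγδ.2 _ (h x γ δ α' δ' hγδ.1 hu) (prefix_self_append_iff.mpr hδ').isInfix
    rw [append_cancel_right hα'_eq, append_cancel_left hδ'_eq]
end

section
/- A finite language containing a word with a repeated letter is not letter-Cartesian. -/
theorem List.length_iterate_append {A : Type*} (l β : List A) (n : ℕ) :
    ((· ++ l)^[n] β).length = β.length + n * l.length := by
  induction n with
  | zero => simp
  | succ n ih => rw [Function.iterate_succ_apply', length_append, ih, Nat.succ_mul, Nat.add_assoc]

theorem List.iterate_append_injective {A : Type*} {l : List A} (hl : l ≠ []) (β : List A) :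
    Function.Injective fun n => (· ++ l)^[n] β := by
  have hmono : StrictMono fun n => ((· ++ l)^[n] β).length := by
    refine strictMono_nat_of_lt_succ fun n => ?_
    simp only [length_iterate_append, Nat.succ_mul]
    have := length_pos_iff.mpr hl
    omega
  exact hmono.injective.of_comp

namespace LetterCartesian

variable {A : Type*} {L : Set (List A)}

theorem pump_mem (hL : LetterCartesian L) {a : A} {β γ δ : List A}
    (h : β ++ a :: γ ++ a :: δ ∈ L) : (β ++ a :: γ) ++ a :: γ ++ a :: δ ∈ L := by
  have h' : β ++ [a] ++ (γ ++ a :: δ) ∈ L := by simpa using h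
  have h'' : (β ++ a :: γ) ++ [a] ++ δ ∈ L := by simpa using h
  simpa using hL a (β ++ a :: γ) δ β (γ ++ a :: δ) h'' h'

theorem iterate_pump_mem (hL : LetterCartesian L) {a : A} {β γ δ : List A}
    (h : β ++ a :: γ ++ a :: δ ∈ L) (n : ℕ) : (· ++ a :: γ)^[n] β ++ a :: γ ++ a :: δ ∈ L := by
  induction n with
  | zero => exact h
  | succ n ih => simpa only [Function.iterate_succ_apply'] using hL.pump_mem ih

theorem infinite_of_mem (hL : LetterCartesian L) {a : A} {β γ δ : List A}
    (h : β ++ a :: γ ++ a :: δ ∈ L) : L.Infinite :=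
  have hinj : Function.Injective fun n => (· ++ a :: γ)^[n] β ++ a :: γ ++ a :: δ :=
    (List.append_left_injective _).comp
      ((List.append_left_injective _).comp (List.iterate_append_injective (List.cons_ne_nil a γ) β))
  Set.infinite_of_injective_forall_mem hinj (hL.iterate_pump_mem h)

end LetterCartesian

theorem finite_repeated_not_letterCartesian {A : Type*} (L : Set (List A))
    (hfin : L.Finite)
    (hrep : ∃ (a : A) (β γ δ : List A), β ++ [a] ++ γ ++ [a] ++ δ ∈ L) :
    ¬ LetterCartesian L := by
  intro hL
  obtain ⟨a, β, γ, δ, hw⟩ := hrep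
  exact hL.infinite_of_mem (by simpa using hw) hfin
end

section
/- Let ℓ be an odd positive integer, G = (V,E) a finite simple undirected graph with m edges, and G' the ℓ-subdivision of G obtained by replacing each edge by a path with ℓ−1 fresh internal vertices. Then the minimum size of a vertex cover of G' equals k + m(ℓ−1)/2, where k is the minimum size of a vertex cover of G. -/
/-- The vertices of the `ℓ`-subdivision: original vertices, plus `ℓ - 1` fresh
internal vertices for each edge. -/
abbrev SubdivVertex (V : Type*) (ℓ : ℕ) (E : Finset (V × V)) :=
  V ⊕ ({p // p ∈ E} × Fin (ℓ - 1))

/-- The `i`-th vertex (for `i : Fin (ℓ+1)`) on the subdivision path replacing edge `e`: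
position `0` is the tail, position `ℓ` is the head, and the positions in between are
the fresh internal vertices. -/
def subdivVert {V : Type*} (ℓ : ℕ) (E : Finset (V × V))
    (e : {p // p ∈ E}) (i : Fin (ℓ + 1)) : SubdivVertex V ℓ E :=
  if h0 : (i : ℕ) = 0 then Sum.inl e.1.1
  else if hl : (i : ℕ) = ℓ then Sum.inl e.1.2
  else Sum.inr (e, ⟨(i : ℕ) - 1, by have := i.isLt; omega⟩)

/-!
A vertex cover of the path replacing an edge needs `(ℓ - 1) / 2` internal vertices, since its
`ℓ - 1` internal vertices span a path of their own; if it misses both endpoints it needs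
`(ℓ + 1) / 2`, since the whole path has `ℓ + 1` vertices. Hence from a cover `D` of the subdivision,
the original vertices of `D` together with one endpoint of each edge whose endpoints `D` misses
form a cover of `G`, and each such edge is paid for by an extra internal vertex of `D`. Conversely,
a cover of `G` extends to the subdivision by every second internal vertex of each path, starting
next to the tail unless the tail is in the cover.
-/

namespace Subdivision

open Finset

section PathCover

/-- `P` covers every edge `{j, j + 1}` of the path on the vertices `a, …, b - 1`. -/
def CoversPath (P : ℕ → Prop) (a b : ℕ) : Prop :=
  ∀ j, a ≤ j → j + 1 < b → P j ∨ P (j + 1)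

variable {P : ℕ → Prop} {a b : ℕ}

lemma CoversPath.mono {a' b' : ℕ} (h : CoversPath P a b) (ha : a ≤ a') (hb : b' ≤ b) :
    CoversPath P a' b' :=
  fun j hj hjb => h j (ha.trans hj) (hjb.trans_le hb)

/-- The disjoint edges `{a + 2i, a + 2i + 1}` each contribute a vertex of their own. -/
lemma CoversPath.half_le_card [DecidablePred P] (h : CoversPath P a b) :
    (b - a) / 2 ≤ #{j ∈ Ico a b | P j} := by
  have key := card_le_card_of_injOn (s := range ((b - a) / 2)) (t := {j ∈ Ico a b | P j})
    (fun i => if P (a + 2 * i) then a + 2 * i else a + 2 * i + 1) ?_ ?_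
  · simpa using key
  · intro i hi
    simp only [coe_range, Set.mem_Iio] at hi
    have hcov := h (a + 2 * i) (by omega) (by omega)
    simp only [coe_filter, mem_Ico, Set.mem_ofPred_eq]
    split_ifs with hP
    · exact ⟨⟨by omega, by omega⟩, hP⟩
    · exact ⟨⟨by omega, by omega⟩, hcov.resolve_left hP⟩
  · intro i _ i' _ hii'
    simp only at hii'
    split_ifs at hii' <;> omega

lemma CoversPath.le_card_interior [DecidablePred P] {ℓ : ℕ} (hℓ : Odd ℓ)
    (h : CoversPath P 0 (ℓ + 1)) :
    (ℓ - 1) / 2 + (if ¬P 0 ∧ ¬P ℓ then 1 else 0) ≤ #{j ∈ Ico 1 ℓ | P j} := by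
  obtain ⟨c, rfl⟩ := hℓ
  split_ifs with hends
  · obtain ⟨h0, hlast⟩ := hends
    have hsub : {j ∈ Ico 0 (2 * c + 1 + 1) | P j} ⊆ {j ∈ Ico 1 (2 * c + 1) | P j} := by
      intro j hj
      simp only [mem_filter, mem_Ico] at hj ⊢
      obtain ⟨hj, hPj⟩ := hj
      have : j ≠ 0 := by rintro rfl; exact h0 hPj
      have : j ≠ 2 * c + 1 := by rintro rfl; exact hlast hPj
      exact ⟨⟨by omega, by omega⟩, hPj⟩
    have := h.half_le_card.trans (card_le_card hsub)
    omega
  · simpa using (h.mono (a' := 1) (b' := 2 * c + 1) (by omega) (by omega)).half_le_card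

end PathCover

variable {V : Type*} {ℓ : ℕ} {E : Finset (V × V)} {D : Finset (SubdivVertex V ℓ E)}

def IsVertexCover (E : Finset (V × V)) (C : Finset V) : Prop :=
  ∀ p ∈ E, p.1 ∈ C ∨ p.2 ∈ C

def IsSubdivCover (ℓ : ℕ) (E : Finset (V × V)) (D : Finset (SubdivVertex V ℓ E)) : Prop :=
  ∀ (e : {p // p ∈ E}) (i : Fin ℓ),
    subdivVert ℓ E e i.castSucc ∈ D ∨ subdivVert ℓ E e i.succ ∈ D

/-- `subdivVert` with positions in `ℕ`, so that `CoversPath` applies; positions past `ℓ` give the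
head. -/
def pathVertex (ℓ : ℕ) (E : Finset (V × V)) (e : {p // p ∈ E}) (j : ℕ) : SubdivVertex V ℓ E :=
  if h : 0 < j ∧ j < ℓ then Sum.inr (e, ⟨j - 1, by omega⟩)
  else if j = 0 then Sum.inl e.1.1 else Sum.inl e.1.2

lemma subdivVert_eq_pathVertex (e : {p // p ∈ E}) (i : Fin (ℓ + 1)) :
    subdivVert ℓ E e i = pathVertex ℓ E e i := by
  have := i.isLt
  unfold subdivVert pathVertex
  split_ifs <;> first | rfl | omega

lemma pathVertex_zero (e : {p // p ∈ E}) : pathVertex ℓ E e 0 = Sum.inl e.1.1 := by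
  simp [pathVertex]

lemma pathVertex_self (hℓ : ℓ ≠ 0) (e : {p // p ∈ E}) : pathVertex ℓ E e ℓ = Sum.inl e.1.2 := by
  simp [pathVertex, hℓ]

lemma pathVertex_of_pos_of_lt (e : {p // p ∈ E}) {j : ℕ} (h0 : 0 < j) (hj : j < ℓ) :
    pathVertex ℓ E e j = Sum.inr (e, ⟨j - 1, by omega⟩) := by
  simp [pathVertex, h0, hj]

lemma IsSubdivCover.coversPath (hD : IsSubdivCover ℓ E D) (e : {p // p ∈ E}) :
    CoversPath (pathVertex ℓ E e · ∈ D) 0 (ℓ + 1) := by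
  intro j _ hj
  simpa only [subdivVert_eq_pathVertex, Fin.val_castSucc, Fin.val_succ] using hD e ⟨j, by omega⟩

section LowerBound

variable [DecidableEq V]

def uncoveredEdges (D : Finset (SubdivVertex V ℓ E)) : Finset {p // p ∈ E} :=
  {e | e.1.1 ∉ D.toLeft ∧ e.1.2 ∉ D.toLeft}

lemma mem_uncoveredEdges {e : {p // p ∈ E}} :
    e ∈ uncoveredEdges D ↔ e.1.1 ∉ D.toLeft ∧ e.1.2 ∉ D.toLeft := by
  simp [uncoveredEdges]

lemma card_interior_le_card_fiber (D : Finset (SubdivVertex V ℓ E)) (e : {p // p ∈ E}) :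
    #{j ∈ Ico 1 ℓ | pathVertex ℓ E e j ∈ D} ≤ #{x ∈ D.toRight | x.1 = e} := by
  refine card_le_card_of_surjOn (fun x => x.2.val + 1) fun j hj => ?_
  simp only [coe_filter, mem_Ico, Set.mem_ofPred_eq] at hj
  obtain ⟨⟨hj1, hjℓ⟩, hjD⟩ := hj
  rw [pathVertex_of_pos_of_lt e hj1 hjℓ] at hjD
  exact ⟨(e, ⟨j - 1, by omega⟩), by simpa using hjD, by simp only; omega⟩

lemma IsSubdivCover.le_card_fiber (hℓ : Odd ℓ) (hD : IsSubdivCover ℓ E D) (e : {p // p ∈ E}) :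
    (ℓ - 1) / 2 + (if e ∈ uncoveredEdges D then 1 else 0)
      ≤ #{x ∈ D.toRight | x.1 = e} := by
  have := (hD.coversPath e).le_card_interior hℓ
  simp only [pathVertex_zero, pathVertex_self hℓ.pos.ne', ← mem_toLeft, ← mem_uncoveredEdges]
    at this
  exact this.trans (card_interior_le_card_fiber D e)

lemma IsSubdivCover.card_toRight_ge (hℓ : Odd ℓ) (hD : IsSubdivCover ℓ E D) :
    #E * ((ℓ - 1) / 2) + #(uncoveredEdges D) ≤ #D.toRight :=
  calc #E * ((ℓ - 1) / 2) + #(uncoveredEdges D)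
      = ∑ e, ((ℓ - 1) / 2 + if e ∈ uncoveredEdges D then 1 else 0) := by
        rw [sum_add_distrib, sum_const, card_univ, Fintype.card_coe, smul_eq_mul, sum_boole,
          filter_mem_eq_inter, univ_inter, Nat.cast_id]
    _ ≤ ∑ e, #{x ∈ D.toRight | x.1 = e} := sum_le_sum fun e _ => hD.le_card_fiber hℓ e
    _ = #D.toRight := (card_eq_sum_card_fiberwise fun x _ => mem_univ x.1).symm

lemma isVertexCover_toLeft_union_uncoveredEdges (D : Finset (SubdivVertex V ℓ E)) :
    IsVertexCover E (D.toLeft ∪ (uncoveredEdges D).image (·.1.1)) := by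
  intro p hp
  by_cases hunc : ⟨p, hp⟩ ∈ uncoveredEdges D
  · exact Or.inl (mem_union_right _ (mem_image_of_mem _ hunc))
  · rw [mem_uncoveredEdges, not_and_or, not_not, not_not] at hunc
    exact hunc.imp (mem_union_left _) (mem_union_left _)

lemma IsSubdivCover.card_ge (hℓ : Odd ℓ) (hD : IsSubdivCover ℓ E D) {k : ℕ}
    (hk : ∀ C, IsVertexCover E C → k ≤ #C) :
    k + #E * ((ℓ - 1) / 2) ≤ #D :=
  calc k + #E * ((ℓ - 1) / 2)
      ≤ #D.toLeft + #(uncoveredEdges D) + #E * ((ℓ - 1) / 2) := by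
        gcongr
        exact (hk _ (isVertexCover_toLeft_union_uncoveredEdges D)).trans
          ((card_union_le _ _).trans (Nat.add_le_add_left card_image_le _))
    _ ≤ #D.toLeft + #D.toRight := by linarith [hD.card_toRight_ge hℓ]
    _ = #D := card_toLeft_add_card_toRight

end LowerBound

section UpperBound

variable [DecidableEq V] {C : Finset V}

/-- Internal vertex `t` sits at position `t + 1` of its path, so this takes the internal vertices at
even positions when the tail is in `C` and those at odd positions otherwise. -/
def alternatingCover (ℓ : ℕ) (E : Finset (V × V)) (C : Finset V) : Finset (SubdivVertex V ℓ E) :=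
  C.disjSum ((univ : Finset ({p // p ∈ E} × Fin ((ℓ - 1) / 2))).image fun x =>
    (x.1, ⟨2 * x.2 + if x.1.1.1 ∈ C then 1 else 0, by have := x.2.isLt; split <;> omega⟩))

lemma inl_mem_alternatingCover {v : V} : Sum.inl v ∈ alternatingCover ℓ E C ↔ v ∈ C :=
  inl_mem_disjSum

lemma inr_mem_alternatingCover (hℓ : Odd ℓ) {e : {p // p ∈ E}} {t : Fin (ℓ - 1)} :
    Sum.inr (e, t) ∈ alternatingCover ℓ E C ↔ t.val % 2 = if e.1.1 ∈ C then 1 else 0 := by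
  obtain ⟨c, rfl⟩ := hℓ
  simp only [alternatingCover, inr_mem_disjSum, mem_image, mem_univ, true_and, Prod.exists,
    Prod.mk.injEq]
  constructor
  · rintro ⟨e', s, rfl, rfl⟩
    split_ifs <;> simp
  · intro ht
    refine ⟨e, ⟨t / 2, by omega⟩, rfl, Fin.ext ?_⟩
    split_ifs at ht ⊢ <;> simp only <;> omega

lemma card_alternatingCover : #(alternatingCover ℓ E C) = #C + #E * ((ℓ - 1) / 2) := by
  rw [alternatingCover, card_disjSum, card_image_of_injective, card_univ, Fintype.card_prod,
    Fintype.card_coe, Fintype.card_fin]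
  rintro ⟨e, s⟩ ⟨e', s'⟩ h
  simp only [Prod.mk.injEq, Fin.ext_iff] at h
  obtain ⟨rfl, h⟩ := h
  have : s = s' := Fin.ext (by omega)
  rw [this]

lemma IsVertexCover.isSubdivCover_alternatingCover (hℓ : Odd ℓ) (hC : IsVertexCover E C) :
    IsSubdivCover ℓ E (alternatingCover ℓ E C) := by
  intro e i
  rw [subdivVert_eq_pathVertex, subdivVert_eq_pathVertex, Fin.val_castSucc, Fin.val_succ]
  have hi := i.isLt
  obtain ⟨c, hc⟩ := hℓ
  unfold pathVertex
  by_cases hu : e.1.1 ∈ C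
  · split_ifs <;> simp only [inl_mem_alternatingCover, inr_mem_alternatingCover ⟨c, hc⟩, hu,
      if_true, true_or, or_true] <;> omega
  · have hv := (hC e.1 e.2).resolve_left hu
    split_ifs <;> simp only [inl_mem_alternatingCover, inr_mem_alternatingCover ⟨c, hc⟩, hu, hv,
      if_false, true_or, or_true] <;> first | contradiction | omega

end UpperBound

end Subdivision

theorem vertex_cover_subdivision_general {V : Type*} [DecidableEq V]
    (ℓ : ℕ) (hodd : Odd ℓ)
    (E : Finset (V × V))
    (k : ℕ)
    (hk : IsLeast {n : ℕ | ∃ C : Finset V,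
      (∀ p ∈ E, p.1 ∈ C ∨ p.2 ∈ C) ∧ C.card = n} k) :
    IsLeast {n : ℕ | ∃ D : Finset (SubdivVertex V ℓ E),
      (∀ (e : {p // p ∈ E}) (i : Fin ℓ),
        subdivVert ℓ E e i.castSucc ∈ D ∨ subdivVert ℓ E e i.succ ∈ D) ∧
      D.card = n}
      (k + E.card * ((ℓ - 1) / 2)) := by
  obtain ⟨C, hC, rfl⟩ := hk.1
  refine ⟨⟨Subdivision.alternatingCover ℓ E C,
    Subdivision.IsVertexCover.isSubdivCover_alternatingCover hodd hC,
    Subdivision.card_alternatingCover⟩, ?_⟩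
  rintro _ ⟨D, hD, rfl⟩
  exact Subdivision.IsSubdivCover.card_ge hodd hD fun C' hC' => hk.2 ⟨C', hC', rfl⟩

theorem vertex_cover_subdivision {V : Type*} [Fintype V] [DecidableEq V]
    (ℓ : ℕ) (hodd : Odd ℓ) (hpos : 0 < ℓ)
    (E : Finset (V × V))
    (hirr : ∀ p ∈ E, p.1 ≠ p.2)
    (hanti : ∀ p ∈ E, (p.2, p.1) ∉ E)
    (k : ℕ)
    (hk : IsLeast {n : ℕ | ∃ C : Finset V,
      (∀ p ∈ E, p.1 ∈ C ∨ p.2 ∈ C) ∧ C.card = n} k) :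
    IsLeast {n : ℕ | ∃ D : Finset (SubdivVertex V ℓ E),
      (∀ (e : {p // p ∈ E}) (i : Fin ℓ),
        subdivVert ℓ E e i.castSucc ∈ D ∨ subdivVert ℓ E e i.succ ∈ D) ∧
      D.card = n}
      (k + E.card * ((ℓ - 1) / 2)) :=
  vertex_cover_subdivision_general ℓ hodd E k hk
end

section
/- Let L' be a reduced language containing a word of the form βaγaδ with the maximal-gap property: no word of L' has two occurrences of a common letter separated by a gap strictly longer than |γ|. If β ≠ ε and δ ≠ ε, then L' is four-legged: there exist a letter x and nonempty words α', β', γ', δ' with α'xβ' ∈ L', γ'xδ' ∈ L', and α'xδ' ∉ L'. -/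
def Reduced {A : Type*} (L : Set (List A)) : Prop :=
  ∀ w ∈ L, ∀ u, StrictInfix u w → u ∉ L

def FourLegged {A : Type*} (L : Set (List A)) : Prop :=
  Reduced L ∧ ∃ (x : A) (α β γ δ : List A),
    α ≠ [] ∧ β ≠ [] ∧ γ ≠ [] ∧ δ ≠ [] ∧
    α ++ [x] ++ β ∈ L ∧ γ ++ [x] ++ δ ∈ L ∧ α ++ [x] ++ δ ∉ L

theorem maximal_gap_fourLegged {A : Type*} (L' : Set (List A))
    (hred : Reduced L')
    (a : A) (β γ δ : List A)
    (hmem : β ++ [a] ++ γ ++ [a] ++ δ ∈ L')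
    (hmax : ∀ (a' : A) (β' γ' δ' : List A),
      β' ++ [a'] ++ γ' ++ [a'] ++ δ' ∈ L' → γ'.length ≤ γ.length)
    (hβ : β ≠ []) (hδ : δ ≠ []) :
    FourLegged L' := by
  -- Split `βaγaδ` at its first and at its second `a`; crossing the two legs gives `βaγaγaδ`,
  -- whose gap `γaγ` is longer than the maximal one.
  refine ⟨hred, a, β ++ [a] ++ γ, δ, β, γ ++ [a] ++ δ, by simp, hδ, hβ, by simp, ?_, ?_, fun h => ?_⟩
  · simpa only [List.append_assoc] using hmem
  · simpa only [List.append_assoc] using hmem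
  · have hgap := hmax a β (γ ++ [a] ++ γ) δ (by simpa only [List.append_assoc] using h)
    simp at hgap
end

section
/- Let L be a reduced language and suppose L is four-legged with some body x ∈ Σ: there exist nonempty words α', β', γ', δ' with α'xβ' ∈ L, γ'xδ' ∈ L, and α'xδ' ∉ L. Then L has stable legs with body x: there exist nonempty words α, β, γ, δ such that αxβ ∈ L, γxδ ∈ L, and no infix of αxδ (including αxδ itself) is in L. -/
/-!
Among all legs (nonempty words that occur on one side of `x` in a word of `L` with a nonempty
other side) pick those that are minimal: left legs with no proper suffix that is a left leg,
right legs with no proper prefix that is a right leg. If some minimal left leg `ζ` and minimal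
right leg `η` give `ζ ++ [x] ++ η ∉ L`, this word has no infix in `L`: an infix avoiding one side
is a proper infix of a word of `L` (by reducedness not in `L`), and an infix `a ++ [x] ++ d` with
both sides nonempty would make `a` and `d` legs, hence `a = ζ` and `d = η` by minimality.
Otherwise every minimal pair spans a word of `L`; then in any word `γ ++ [x] ++ δ` of `L` the
minimal legs inside `γ` and `δ` span an infix in `L`, so by reducedness `γ` and `δ` are
themselves minimal, and `α' ++ [x] ++ δ' ∈ L`, contradicting four-leggedness.
-/

namespace List

variable {A : Type*}

theorem exists_suffix_minimal (P : List A → Prop) {l : List A} (hl : P l) :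
    ∃ m, m <:+ l ∧ P m ∧ ∀ w, w <:+ m → P w → w = m := by
  obtain ⟨m, ⟨hml, hm⟩, hmin⟩ :=
    (measure length).wf.has_min {w | w <:+ l ∧ P w} ⟨l, suffix_refl l, hl⟩
  refine ⟨m, hml, hm, fun w hwm hw => hwm.eq_of_length_le ?_⟩
  exact not_lt.mp (hmin w ⟨hwm.trans hml, hw⟩)

theorem exists_prefix_minimal (P : List A → Prop) {l : List A} (hl : P l) :
    ∃ m, m <+: l ∧ P m ∧ ∀ w, w <+: m → P w → w = m := by
  obtain ⟨m, ⟨hml, hm⟩, hmin⟩ :=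
    (measure length).wf.has_min {w | w <+: l ∧ P w} ⟨l, prefix_refl l, hl⟩
  refine ⟨m, hml, hm, fun w hwm hw => hwm.eq_of_length_le ?_⟩
  exact not_lt.mp (hmin w ⟨hwm.trans hml, hw⟩)

theorem infix_append_singleton_append {u l r : List A} {x : A} (h : u <:+: l ++ [x] ++ r) :
    u <:+: l ++ [x] ∨ u <:+: x :: r ∨
      ∃ a d, a ≠ [] ∧ d ≠ [] ∧ a <:+ l ∧ d <+: r ∧ u = a ++ [x] ++ d := by
  rw [append_assoc, singleton_append, infix_append_iff] at h
  rcases h with h | h | ⟨a, r', rfl, ha, hr'⟩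
  · exact .inl (infix_append_of_infix_left h)
  · exact .inr (.inl h)
  rcases prefix_cons_iff.mp hr' with rfl | ⟨d, rfl, hd⟩
  · exact .inl (by simpa using infix_append_of_infix_left ha.isInfix)
  rcases eq_or_ne a [] with rfl | ha0
  · exact .inr (.inl (prefix_cons_inj x |>.mpr hd).isInfix)
  rcases eq_or_ne d [] with rfl | hd0
  · obtain ⟨s, rfl⟩ := ha
    exact .inl ⟨s, [], by simp⟩
  exact .inr (.inr ⟨a, d, ha0, hd0, ha, hd, by simp⟩)

end List

section Legs

variable {A : Type*} {L : Set (List A)}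

theorem Reduced.eq_of_infix (hred : Reduced L) {u w : List A} (hw : w ∈ L) (hu : u ∈ L)
    (huw : u <:+: w) : u = w := by
  obtain ⟨s, t, rfl⟩ := huw
  by_contra hne
  exact hred _ hw u ⟨s, t, rfl, fun hst => hne (by simp_all)⟩ hu

theorem Reduced.not_mem_of_infix_of_length_lt (hred : Reduced L) {u w : List A} (hw : w ∈ L)
    (huw : u <:+: w) (hlen : u.length < w.length) : u ∉ L :=
  fun hu => hlen.ne (congrArg List.length (hred.eq_of_infix hw hu huw))

variable (L) (x : A)

def IsLeftLeg (ζ : List A) : Prop :=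
  ζ ≠ [] ∧ ∃ η, η ≠ [] ∧ ζ ++ [x] ++ η ∈ L

def IsRightLeg (η : List A) : Prop :=
  η ≠ [] ∧ ∃ ζ, ζ ≠ [] ∧ ζ ++ [x] ++ η ∈ L

def IsMinimalLeftLeg (ζ : List A) : Prop :=
  IsLeftLeg L x ζ ∧ ∀ w, w <:+ ζ → IsLeftLeg L x w → w = ζ

def IsMinimalRightLeg (η : List A) : Prop :=
  IsRightLeg L x η ∧ ∀ w, w <+: η → IsRightLeg L x w → w = η

variable {L x}

theorem Reduced.infix_not_mem_of_isMinimalLeg (hred : Reduced L) {ζ η : List A}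
    (hζ : IsMinimalLeftLeg L x ζ) (hη : IsMinimalRightLeg L x η) (hζη : ζ ++ [x] ++ η ∉ L) :
    ∀ u, u <:+: ζ ++ [x] ++ η → u ∉ L := by
  obtain ⟨-, η₀, hη₀, hζη₀⟩ := hζ.1
  obtain ⟨-, ζ₀, hζ₀, hζ₀η⟩ := hη.1
  intro u hu
  rcases List.infix_append_singleton_append hu with hu | hu | ⟨a, d, ha0, hd0, ha, hd, rfl⟩
  · refine hred.not_mem_of_infix_of_length_lt hζη₀ (List.infix_append_of_infix_left hu) ?_
    calc u.length ≤ (ζ ++ [x]).length := hu.length_le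
      _ < (ζ ++ [x] ++ η₀).length := by simp [List.length_pos_of_ne_nil hη₀]
  · refine hred.not_mem_of_infix_of_length_lt hζ₀η
      (by simpa using List.infix_append_of_infix_right (l₂ := ζ₀) hu) ?_
    calc u.length ≤ (x :: η).length := hu.length_le
      _ < (ζ₀ ++ [x] ++ η).length := by simp [List.length_pos_of_ne_nil hζ₀]
  · intro hu
    have haζ : a = ζ := hζ.2 a ha ⟨ha0, d, hd0, hu⟩
    have hdη : d = η := hη.2 d hd ⟨hd0, a, ha0, hu⟩
    exact hζη (haζ ▸ hdη ▸ hu)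

theorem Reduced.isMinimalLeg_of_mem (hred : Reduced L)
    (hmin : ∀ ζ η, IsMinimalLeftLeg L x ζ → IsMinimalRightLeg L x η → ζ ++ [x] ++ η ∈ L)
    {γ δ : List A} (hγ : γ ≠ []) (hδ : δ ≠ []) (hγδ : γ ++ [x] ++ δ ∈ L) :
    IsMinimalLeftLeg L x γ ∧ IsMinimalRightLeg L x δ := by
  obtain ⟨g, ⟨s, rfl⟩, hg⟩ := List.exists_suffix_minimal (IsLeftLeg L x) ⟨hγ, δ, hδ, hγδ⟩
  obtain ⟨d, ⟨t, rfl⟩, hd⟩ := List.exists_prefix_minimal (IsRightLeg L x) ⟨hδ, s ++ g, hγ, hγδ⟩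
  have heq := hred.eq_of_infix hγδ (hmin g d hg hd) ⟨s, t, by simp⟩
  have hlen := congrArg List.length heq
  simp only [List.length_append, List.length_singleton] at hlen
  obtain rfl : s = [] := List.eq_nil_of_length_eq_zero (by omega)
  obtain rfl : t = [] := List.eq_nil_of_length_eq_zero (by omega)
  simpa using ⟨hg, hd⟩

end Legs

theorem stable_legs {A : Type*} (L : Set (List A)) (hred : Reduced L)
    (x : A)
    (hfl : ∃ α' β' γ' δ' : List A,
      α' ≠ [] ∧ β' ≠ [] ∧ γ' ≠ [] ∧ δ' ≠ [] ∧
      α' ++ [x] ++ β' ∈ L ∧ γ' ++ [x] ++ δ' ∈ L ∧ α' ++ [x] ++ δ' ∉ L) :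
    ∃ α β γ δ : List A,
      α ≠ [] ∧ β ≠ [] ∧ γ ≠ [] ∧ δ ≠ [] ∧
      α ++ [x] ++ β ∈ L ∧ γ ++ [x] ++ δ ∈ L ∧
      ∀ u : List A, u <:+: (α ++ [x] ++ δ) → u ∉ L := by
  obtain ⟨α', β', γ', δ', hα', hβ', hγ', hδ', hα'β', hγ'δ', hα'δ'⟩ := hfl
  by_cases h : ∃ ζ η, IsMinimalLeftLeg L x ζ ∧ IsMinimalRightLeg L x η ∧ ζ ++ [x] ++ η ∉ L
  · obtain ⟨ζ, η, hζ, hη, hζη⟩ := h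
    obtain ⟨hζ0, η₀, hη₀, hζη₀⟩ := hζ.1
    obtain ⟨hη0, ζ₀, hζ₀, hζ₀η⟩ := hη.1
    exact ⟨ζ, η₀, ζ₀, η, hζ0, hη₀, hζ₀, hη0, hζη₀, hζ₀η,
      hred.infix_not_mem_of_isMinimalLeg hζ hη hζη⟩
  · push Not at h
    have hα := (hred.isMinimalLeg_of_mem h hα' hβ' hα'β').1
    have hδ := (hred.isMinimalLeg_of_mem h hγ' hδ' hγ'δ').2
    exact absurd (h α' δ' hα hδ) hα'δ'
end

section
/- Let L' be a reduced language containing the words aγaδ with δ ≠ ε, and γ₁aγ₂ with γ₁ ≠ ε, γ₂ ≠ ε, where γ₁ is a suffix of γ. Then L' is four-legged: there exist a letter x and nonempty words α, β, γ', δ' with αxβ ∈ L', γ'xδ' ∈ L', αxδ' ∉ L'. -/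
theorem strictInfix_append_left {A : Type*} (u : List A) {s : List A} (hs : s ≠ []) :
    StrictInfix u (s ++ u) :=
  ⟨s, [], by simp, by simpa using hs⟩

theorem Reduced.not_mem_of_strictInfix {A : Type*} {L : Set (List A)} (hL : Reduced L)
    {u w : List A} (hu : u ∈ L) (h : StrictInfix u w) : w ∉ L :=
  fun hw => hL w hw u h hu

/- Take α = aγ, β = δ, γ' = γ₁, δ' = γ₂. Writing γ = σγ₁, the word αaδ' = aσγ₁aγ₂ has
γ₁aγ₂ ∈ L' as a strict infix, so reducedness excludes it from L'. -/
theorem fourLegged_of_suffix_word {A : Type*} (L' : Set (List A))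
    (hred : Reduced L')
    (a : A) (γ δ γ₁ γ₂ : List A)
    (h1 : [a] ++ γ ++ [a] ++ δ ∈ L') (hδ : δ ≠ [])
    (h2 : γ₁ ++ [a] ++ γ₂ ∈ L') (hγ₁ : γ₁ ≠ []) (hγ₂ : γ₂ ≠ [])
    (hsuf : γ₁ <:+ γ) :
    FourLegged L' := by
  refine ⟨hred, a, a :: γ, δ, γ₁, γ₂, List.cons_ne_nil _ _, hδ, hγ₁, hγ₂,
    by simpa using h1, h2, ?_⟩
  obtain ⟨σ, rfl⟩ := hsuf
  refine hred.not_mem_of_strictInfix h2 ?_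
  simpa using strictInfix_append_left (γ₁ ++ [a] ++ γ₂) (List.cons_ne_nil a σ)
end

section
/- Let L be a reduced language containing the words ηη'aη″η and aη″ηη'a, where a is a letter and η, η', η″ are words with η ≠ ε. If η' ≠ ε or η″ ≠ ε, then L is four-legged. -/
/-! If `η' = c ρ`, split both words at that `c`: `η · c · ρaη''η` and `aη''η · c · ρa` lie in `L`,
while the crossed word `ηcρa` is a proper prefix of the first one. If `η'' = σc`, split at that
`c`: `ηη'aσ · c · η` and `aσ · c · ηη'a` lie in `L`, while the crossed word `ηη'aσcηη'a` has the
first one as a proper prefix. Either way reducedness keeps the crossed word out of `L`. -/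

theorem StrictInfix.self_append {A : Type*} (u : List A) {t : List A} (ht : t ≠ []) :
    StrictInfix u (u ++ t) :=
  ⟨[], t, by simp, by simpa using ht⟩

section Reduced

variable {A : Type*} {L : Set (List A)}

theorem Reduced.not_mem_of_append_mem (hred : Reduced L) {u t : List A} (ht : t ≠ [])
    (h : u ++ t ∈ L) : u ∉ L :=
  hred _ h u (.self_append u ht)

theorem Reduced.append_not_mem (hred : Reduced L) {u t : List A} (ht : t ≠ [])
    (h : u ∈ L) : u ++ t ∉ L :=
  fun h' => hred.not_mem_of_append_mem ht h' h

variable {a : A} {η η' η'' : List A}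

theorem fourLegged_of_overlap_of_ne_nil_left (hred : Reduced L) (hη : η ≠ [])
    (h1 : η ++ η' ++ [a] ++ η'' ++ η ∈ L) (h2 : [a] ++ η'' ++ η ++ η' ++ [a] ∈ L)
    (hη' : η' ≠ []) : FourLegged L := by
  obtain ⟨c, ρ, rfl⟩ := List.exists_cons_of_ne_nil hη'
  refine ⟨hred, c, η, ρ ++ [a] ++ η'' ++ η, [a] ++ η'' ++ η, ρ ++ [a],
    hη, by simp, by simp, by simp, by simpa using h1, by simpa using h2, ?_⟩
  refine hred.not_mem_of_append_mem (t := η'' ++ η) (by simp [hη]) ?_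
  simpa using h1

theorem fourLegged_of_overlap_of_ne_nil_right (hred : Reduced L) (hη : η ≠ [])
    (h1 : η ++ η' ++ [a] ++ η'' ++ η ∈ L) (h2 : [a] ++ η'' ++ η ++ η' ++ [a] ∈ L)
    (hη'' : η'' ≠ []) : FourLegged L := by
  obtain ⟨σ, c, rfl⟩ := (List.eq_nil_or_concat' η'').resolve_left hη''
  refine ⟨hred, c, η ++ η' ++ [a] ++ σ, η, [a] ++ σ, η ++ η' ++ [a],
    by simp, hη, by simp, by simp, by simpa using h1, by simpa using h2, ?_⟩
  have h := hred.append_not_mem (t := η' ++ [a]) (by simp) h1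
  simpa using h

end Reduced

theorem fourLegged_of_overlap {A : Type*} (L : Set (List A))
    (hred : Reduced L)
    (a : A) (η η' η'' : List A) (hη : η ≠ [])
    (h1 : η ++ η' ++ [a] ++ η'' ++ η ∈ L)
    (h2 : [a] ++ η'' ++ η ++ η' ++ [a] ∈ L)
    (hne : η' ≠ [] ∨ η'' ≠ []) :
    FourLegged L := by
  rcases hne with hη' | hη''
  · exact fourLegged_of_overlap_of_ne_nil_left hred hη h1 h2 hη'
  · exact fourLegged_of_overlap_of_ne_nil_right hred hη h1 h2 hη''
end

section
/- Let L be a reduced language containing the word α = aγ₂ηγ₁a and the word α' = γ₁aγ₂, where a is a letter and γ₁, γ₂, η are words with γ₁ ≠ ε and γ₂ ≠ ε. If |γ₁| ≥ 2 or |γ₂| ≥ 2, then L is four-legged. -/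
/-! If `|γ₁| ≥ 2`, write `γ₁ = u x` with `u ≠ ε`: the letter `x` occurs in `u x a γ₂` and in
`a γ₂ η u x a` with nonempty words on both sides, and crossing the legs gives `u x a`, a strict
suffix of `a γ₂ η u x a`, so reducedness keeps it out of `L`. If `|γ₂| ≥ 2`, write `γ₂ = x v`
and cross the legs around `x` in the same two words to get `a x v`, a strict prefix of
`a x v η γ₁ a`. -/

section

variable {A : Type*} {L : Set (List A)}

theorem FourLegged.of_strictInfix (hred : Reduced L) {x : A} {α β γ δ w : List A}
    (hα : α ≠ []) (hβ : β ≠ []) (hγ : γ ≠ []) (hδ : δ ≠ [])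
    (hαβ : α ++ [x] ++ β ∈ L) (hγδ : γ ++ [x] ++ δ ∈ L)
    (hw : w ∈ L) (hinfix : StrictInfix (α ++ [x] ++ δ) w) : FourLegged L :=
  ⟨hred, x, α, β, γ, δ, hα, hβ, hγ, hδ, hαβ, hγδ, hred w hw _ hinfix⟩

theorem fourLegged_of_two_le_length_left (hred : Reduced L) {a : A} {γ₁ γ₂ η : List A}
    (h1 : [a] ++ γ₂ ++ η ++ γ₁ ++ [a] ∈ L) (h2 : γ₁ ++ [a] ++ γ₂ ∈ L)
    (hlong : 2 ≤ γ₁.length) : FourLegged L := by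
  obtain rfl | ⟨u, x, rfl⟩ := γ₁.eq_nil_or_concat'
  · simp at hlong
  have hu : u ≠ [] := by rintro rfl; simp at hlong
  refine FourLegged.of_strictInfix (x := x) (β := a :: γ₂) (γ := a :: (γ₂ ++ η ++ u)) (δ := [a])
    hred hu (List.cons_ne_nil _ _) (List.cons_ne_nil _ _) (List.cons_ne_nil _ _) ?_ ?_ h1
    ⟨[a] ++ γ₂ ++ η, [], by simp, by simp⟩
  · simpa using h2
  · simpa using h1

theorem fourLegged_of_two_le_length_right (hred : Reduced L) {a : A} {γ₁ γ₂ η : List A}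
    (h1 : [a] ++ γ₂ ++ η ++ γ₁ ++ [a] ∈ L) (h2 : γ₁ ++ [a] ++ γ₂ ∈ L)
    (hlong : 2 ≤ γ₂.length) : FourLegged L := by
  obtain ⟨x, v, rfl⟩ : ∃ x v, γ₂ = x :: v := List.exists_cons_of_length_pos (by omega)
  have hv : v ≠ [] := by rintro rfl; simp at hlong
  refine FourLegged.of_strictInfix (x := x) (α := [a]) (β := v ++ η ++ γ₁ ++ [a])
    (γ := γ₁ ++ [a]) hred (List.cons_ne_nil _ _) (by simp) (by simp) hv ?_ ?_ h1
    ⟨[], η ++ γ₁ ++ [a], by simp, by simp⟩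
  · simpa using h1
  · simpa using h2

end

theorem fourLegged_of_long_gamma_general {A : Type*} (L : Set (List A))
    (hred : Reduced L)
    (a : A) (γ₁ γ₂ η : List A)
    (h1 : [a] ++ γ₂ ++ η ++ γ₁ ++ [a] ∈ L)
    (h2 : γ₁ ++ [a] ++ γ₂ ∈ L)
    (hlong : 2 ≤ γ₁.length ∨ 2 ≤ γ₂.length) :
    FourLegged L :=
  hlong.elim (fourLegged_of_two_le_length_left hred h1 h2)
    (fourLegged_of_two_le_length_right hred h1 h2)

theorem fourLegged_of_long_gamma {A : Type*} (L : Set (List A))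
    (hred : Reduced L)
    (a : A) (γ₁ γ₂ η : List A)
    (h1 : [a] ++ γ₂ ++ η ++ γ₁ ++ [a] ∈ L)
    (h2 : γ₁ ++ [a] ++ γ₂ ∈ L)
    (hγ₁ : γ₁ ≠ []) (hγ₂ : γ₂ ≠ [])
    (hlong : 2 ≤ γ₁.length ∨ 2 ≤ γ₂.length) :
    FourLegged L :=
  fourLegged_of_long_gamma_general L hred a γ₁ γ₂ η h1 h2 hlong
end

section
/- Let L be a language with a neutral letter e whose reduced language L' = red(L) is not letter-Cartesian. Then either L' is four-legged, or there is a letter x ∈ Σ with xx ∈ L'. -/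
/-!
Inserting the neutral letter `e` at an inner cut of a word of `red L` keeps it in `red L`. Unless
`red L` is four-legged, `e` then glues Cartesianly: `u e v, u' e v' ∈ red L` give `u e v' ∈ red L`,
and erasing `e` again gives `u v' ∈ red L`. So `red L` is Cartesian for cuts into two nonempty
pieces, and cutting next to the letter `x` yields letter-Cartesianity, except where the cut
produces `x x`.
-/

section

variable {A : Type*}

def Neutral (L : Set (List A)) (e : A) : Prop :=
  ∀ α β : List A, α ++ β ∈ L ↔ α ++ [e] ++ β ∈ L

def SplitCartesian (L : Set (List A)) : Prop :=
  ∀ u v u' v' : List A, u ≠ [] → v ≠ [] → u' ≠ [] → v' ≠ [] →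
    u ++ v ∈ L → u' ++ v' ∈ L → u ++ v' ∈ L

lemma append_append_eq_append_cases {s w t a b : List A} (h : s ++ w ++ t = a ++ b) :
    (∃ r, a = s ++ w ++ r ∧ t = r ++ b) ∨ (∃ r, b = r ++ w ++ t ∧ s = a ++ r) ∨
      ∃ a₂ b₁, w = a₂ ++ b₁ ∧ a = s ++ a₂ ∧ b = b₁ ++ t := by
  rcases List.append_eq_append_iff.mp h with ⟨k, hk, ht⟩ | ⟨k, hk, hb⟩
  · exact Or.inl ⟨k, by rw [hk, List.append_assoc], ht⟩
  · rcases List.append_eq_append_iff.mp hk with ⟨m, ha, hw⟩ | ⟨m, hs, hm⟩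
    · exact Or.inr (Or.inr ⟨m, k, hw, ha, hb⟩)
    · exact Or.inr (Or.inl ⟨m, by rw [hb, hm, List.append_assoc], hs⟩)

lemma append_append_eq_append_singleton_append_cases {s w t u v : List A} {e : A}
    (h : s ++ w ++ t = u ++ [e] ++ v) :
    (∃ r, u = s ++ w ++ r) ∨ (∃ r, v = r ++ w ++ t) ∨
      ∃ a b, w = a ++ [e] ++ b ∧ u = s ++ a ∧ v = b ++ t := by
  rw [List.append_assoc u] at h
  rcases append_append_eq_append_cases h with ⟨r, hu, -⟩ | ⟨r, hr, hs⟩ | ⟨a, b, hw, hu, hv⟩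
  · exact Or.inl ⟨r, hu⟩
  · rcases r with _ | ⟨y, r⟩
    · rcases w with _ | ⟨y, b⟩
      · exact Or.inl ⟨[], by simp [hs]⟩
      · simp only [List.nil_append, List.cons_append, List.cons.injEq] at hr
        exact Or.inr (Or.inr ⟨[], b, by simp [hr.1], by simp [hs], hr.2⟩)
    · simp only [List.cons_append, List.cons.injEq] at hr
      exact Or.inr (Or.inl ⟨r, hr.2⟩)
  · rcases b with _ | ⟨y, b⟩
    · exact Or.inl ⟨[], by simp [hu, hw]⟩
    · simp only [List.cons_append, List.cons.injEq] at hv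
      exact Or.inr (Or.inr ⟨a, b, by simp [hw, hv.1], hu, hv.2⟩)

lemma Reduced.append_eq_nil {L : Set (List A)} (hL : Reduced L) {s w t : List A}
    (hw : w ∈ L) (h : s ++ w ++ t ∈ L) : s ++ t = [] :=
  by_contra fun hst => hL _ h w ⟨s, t, rfl, hst⟩ hw

lemma reduced_red (L : Set (List A)) : Reduced (red L) :=
  fun _ hw u hu hmem => hw.2 u hu hmem.1

variable {L : Set (List A)} {e : A}

lemma Neutral.insert_mem_red (he : Neutral L e) {u v : List A} (hu : u ≠ []) (hv : v ≠ [])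
    (h : u ++ v ∈ red L) : u ++ [e] ++ v ∈ red L := by
  refine ⟨(he u v).mp h.1, ?_⟩
  rintro w ⟨s, t, hst, hne⟩ hw
  rcases append_append_eq_append_singleton_append_cases hst.symm with
    ⟨r, rfl⟩ | ⟨r, rfl⟩ | ⟨a, b, rfl, rfl, rfl⟩
  · exact h.2 w ⟨s, r ++ v, by simp, by simp [hv]⟩ hw
  · exact h.2 w ⟨u ++ r, t, by simp, by simp [hu]⟩ hw
  · exact h.2 (a ++ b) ⟨s, t, by simp, hne⟩ ((he a b).mpr hw)

lemma Neutral.mem_red_of_insert_mem_red (he : Neutral L e) {u v u' v' : List A} (hv : v ≠ [])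
    (hu' : u' ≠ []) (h : u ++ v ∈ red L) (h' : u' ++ v' ∈ red L)
    (hins : u ++ [e] ++ v' ∈ red L) : u ++ v' ∈ red L := by
  refine ⟨(he u v').mpr hins.1, ?_⟩
  rintro w ⟨s, t, hst, hne⟩ hw
  rcases append_append_eq_append_cases hst.symm with
    ⟨r, rfl, -⟩ | ⟨r, rfl, -⟩ | ⟨a, b, rfl, rfl, rfl⟩
  · exact h.2 w ⟨s, r ++ v, by simp, by simp [hv]⟩ hw
  · exact h'.2 w ⟨u' ++ r, t, by simp, by simp [hu']⟩ hw
  · exact hins.2 (a ++ [e] ++ b) ⟨s, t, by simp, hne⟩ ((he a b).mp hw)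

lemma Neutral.splitCartesian_red (he : Neutral L e) (hL : ¬ FourLegged (red L)) :
    SplitCartesian (red L) := by
  intro u v u' v' hu hv hu' hv' h h'
  have hins : u ++ [e] ++ v' ∈ red L := by
    by_contra hout
    exact hL ⟨reduced_red L, e, u, v, u', v', hu, hv, hu', hv',
      he.insert_mem_red hu hv h, he.insert_mem_red hu' hv' h', hout⟩
  exact he.mem_red_of_insert_mem_red hv hu' h h' hins

lemma SplitCartesian.letterCartesian (hsplit : SplitCartesian L) (hred : Reduced L)
    (hxx : ∀ x, [x, x] ∉ L) : LetterCartesian L := by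
  intro x α β γ δ h₁ h₂
  by_cases hx : [x] ∈ L
  · obtain ⟨rfl, rfl⟩ := List.append_eq_nil_iff.mp (hred.append_eq_nil hx h₁)
    obtain ⟨-, rfl⟩ := List.append_eq_nil_iff.mp (hred.append_eq_nil hx h₂)
    simpa using hx
  by_cases hβδ : β ≠ [] ∧ δ ≠ []
  · simpa using hsplit (α ++ [x]) β (γ ++ [x]) δ (by simp) hβδ.1 (by simp) hβδ.2 h₁ h₂
  by_cases hαγ : α ≠ [] ∧ γ ≠ []
  · simpa using hsplit α ([x] ++ β) γ ([x] ++ δ) hαγ.1 (by simp) hαγ.2 (by simp)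
      (by simpa using h₁) (by simpa using h₂)
  -- Left are the pairs `[x] ++ β, γ ++ [x]` and `α ++ [x], [x] ++ δ`; crossing them gives `[x, x]`.
  exfalso
  rcases eq_or_ne α [] with rfl | hα
  · have hβ : β ≠ [] := by rintro rfl; exact hx (by simpa using h₁)
    obtain rfl : δ = [] := by tauto
    have hγ : γ ≠ [] := by rintro rfl; exact hx (by simpa using h₂)
    exact hxx x (by
      simpa using hsplit [x] β γ [x] (by simp) hβ hγ (by simp) h₁ (by simpa using h₂))
  · obtain rfl : γ = [] := by tauto
    have hδ : δ ≠ [] := by rintro rfl; exact hx (by simpa using h₂)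
    obtain rfl : β = [] := by tauto
    exact hxx x (by
      simpa using hsplit [x] δ α [x] (by simp) hδ hα (by simp) h₂ (by simpa using h₁))

end

theorem neutral_nonlocal_dichotomy {A : Type*} (L : Set (List A)) (e : A)
    (hneutral : ∀ α β : List A, α ++ β ∈ L ↔ α ++ [e] ++ β ∈ L)
    (hnotlc : ¬ LetterCartesian (red L)) :
    FourLegged (red L) ∨ ∃ x : A, [x, x] ∈ red L := by
  by_contra! h
  have he : Neutral L e := hneutral
  exact hnotlc ((he.splitCartesian_red h.1).letterCartesian (reduced_red L) h.2)
end

section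
/- A chain language over a finite alphabet Σ contains at most |Σ| words of length at least 3; in particular, every chain language over a finite alphabet is finite. -/
/-!
The second letter of a word of length at least 3 is an interior letter, and an interior letter of a
word of a chain language occurs in no other word. So the second letter determines a long word,
which injects the long words into the alphabet. The words of length at most 2 are finitely many
anyway.
-/

def ChainLang {A : Type*} (L : Set (List A)) : Prop :=
  (∀ w ∈ L, ¬ ∃ (β γ δ : List A) (a : A), w = β ++ [a] ++ γ ++ [a] ++ δ) ∧
  (∀ (a b : A) (γ : List A), [a] ++ γ ++ [b] ∈ L →
    ∀ c ∈ γ, ∀ w ∈ L, w ≠ [a] ++ γ ++ [b] → c ∉ w)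

lemma List.exists_eq_cons_cons_append_singleton {A : Type*} {l : List A} (h : 3 ≤ l.length) :
    ∃ a c γ b, l = [a] ++ (c :: γ) ++ [b] := by
  obtain _ | ⟨a, _ | ⟨c, rest⟩⟩ := l
  · simp at h
  · simp at h
  obtain rfl | ⟨γ, b, rfl⟩ := rest.eq_nil_or_concat
  · simp at h
  · exact ⟨a, c, γ, b, by simp⟩

namespace ChainLang

variable {A : Type*} {L : Set (List A)}

lemma eq_of_mem_interior (hL : ChainLang L) {a b c : A} {γ w : List A}
    (hγ : [a] ++ γ ++ [b] ∈ L) (hc : c ∈ γ) (hw : w ∈ L) (hcw : c ∈ w) :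
    w = [a] ++ γ ++ [b] := by
  by_contra hne
  exact hL.2 a b γ hγ c hc w hw hne hcw

lemma injOn_getElem?_one (hL : ChainLang L) :
    Set.InjOn (·[1]?) {w ∈ L | 3 ≤ w.length} := by
  rintro w ⟨hwL, hw⟩ w' ⟨hw'L, -⟩ hsame
  obtain ⟨a, c, γ, b, rfl⟩ := List.exists_eq_cons_cons_append_singleton hw
  have hc : w'[1]? = some c := by simpa using hsame.symm
  exact (hL.eq_of_mem_interior hwL List.mem_cons_self hw'L (List.mem_of_getElem? hc)).symm

end ChainLang

lemma List.getElem?_one_mem_range_some {A : Type*} {w : List A} (hw : 2 ≤ w.length) :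
    w[1]? ∈ Set.range some :=
  ⟨w[1], (List.getElem?_eq_getElem hw).symm⟩

theorem chain_lang_finite {A : Type*} [Fintype A] (L : Set (List A))
    (hchain : ChainLang L) :
    {w ∈ L | 3 ≤ w.length}.Finite ∧
    {w ∈ L | 3 ≤ w.length}.ncard ≤ Fintype.card A ∧
    L.Finite := by
  have hmaps : Set.MapsTo (·[1]?) {w ∈ L | 3 ≤ w.length} (Set.range (some : A → Option A)) :=
    fun w hw => List.getElem?_one_mem_range_some (Nat.le_of_succ_le hw.2)
  have hlong := Set.Finite.of_injOn hmaps hchain.injOn_getElem?_one (Set.toFinite _)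
  refine ⟨hlong, ?_, ?_⟩
  · calc {w ∈ L | 3 ≤ w.length}.ncard
        ≤ (Set.range (some : A → Option A)).ncard :=
          Set.ncard_le_ncard_of_injOn _ hmaps hchain.injOn_getElem?_one
      _ = Fintype.card A := by
          rw [Set.ncard_range_of_injective (Option.some_injective A), Nat.card_eq_fintype_card]
  · refine (hlong.union (List.finite_length_le A 2)).subset fun w hw => ?_
    by_cases h3 : 3 ≤ w.length
    · exact Or.inl ⟨hw, h3⟩
    · exact Or.inr (show w.length ≤ 2 by omega)
end

section
/- Let L be a language containing a word α = βaγaδ with a repeated letter a. If L is letter-Cartesian, then for every n ≥ 1 the word βa(γa)ⁿδ is in L; in particular L is infinite. -/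
theorem List.injective_append_flatten_replicate {A : Type*} (u v w : List A) (hw : w ≠ []) :
    Function.Injective fun n : ℕ => u ++ (List.replicate n w).flatten ++ v := by
  intro m n h
  have hlen := congrArg List.length h
  simp only [List.length_append, List.length_flatten, List.map_replicate, List.sum_replicate,
    smul_eq_mul] at hlen
  exact Nat.eq_of_mul_eq_mul_right (List.length_pos_iff.mpr hw) (by omega)

theorem LetterCartesian.pump_mem_s18 {A : Type*} {L : Set (List A)} (hlc : LetterCartesian L)
    {a : A} {β γ δ : List A} (hmem : β ++ [a] ++ γ ++ [a] ++ δ ∈ L) (n : ℕ) :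
    β ++ [a] ++ (List.replicate (n + 1) (γ ++ [a])).flatten ++ δ ∈ L := by
  induction n with
  | zero => simpa using hmem
  | succ n ih =>
    have splice := hlc a (β ++ [a] ++ γ) δ β ((List.replicate (n + 1) (γ ++ [a])).flatten ++ δ)
      (by simpa using hmem) (by simpa using ih)
    simpa [List.replicate_succ] using splice

theorem letterCartesian_pump {A : Type*} (L : Set (List A))
    (a : A) (β γ δ : List A)
    (hmem : β ++ [a] ++ γ ++ [a] ++ δ ∈ L)
    (hlc : LetterCartesian L) :
    (∀ n : ℕ, 1 ≤ n →
      β ++ [a] ++ (List.replicate n (γ ++ [a])).flatten ++ δ ∈ L) ∧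
    L.Infinite := by
  have pumped : ∀ n : ℕ, 1 ≤ n →
      β ++ [a] ++ (List.replicate n (γ ++ [a])).flatten ++ δ ∈ L := by
    intro n hn
    obtain ⟨m, rfl⟩ := Nat.exists_eq_add_of_le' hn
    exact hlc.pump_mem_s18 hmem m
  refine ⟨pumped, ?_⟩
  have hinj := List.injective_append_flatten_replicate (β ++ [a]) δ (γ ++ [a]) (by simp)
  exact Set.infinite_of_injective_forall_mem (hinj.comp (add_left_injective 1))
    fun n => pumped (n + 1) n.succ_pos
end

section
/- Let L be a regular language that is not star-free in the sense that for every k > 0 there exist words ρ, σ, τ and m ≥ k such that exactly one of ρσᵏτ and ρσᵐτ belongs to L. If L is reduced, then L is four-legged. -/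
namespace Function

variable {α : Type*} [Fintype α] (f : α → α) (x : α)

theorem iterate_mem_periodicPts_of_card_le {n : ℕ} (hn : Fintype.card α ≤ n) :
    f^[n] x ∈ periodicPts f := by
  obtain ⟨i, j, hij, heq⟩ := Fintype.exists_ne_map_eq_of_card_lt
    (fun i : Fin (Fintype.card α + 1) => f^[i] x) (by simp)
  wlog hlt : i < j generalizing i j
  · exact this j i hij.symm heq.symm (lt_of_le_of_ne (not_lt.mp hlt) hij.symm)
  have hper : IsPeriodicPt f (j - i) (f^[i] x) := by
    rw [IsPeriodicPt, IsFixedPt, ← iterate_add_apply, Nat.sub_add_cancel hlt.le, heq]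
  have hin : f^[n] x = f^[n - i] (f^[i] x) := by
    rw [← iterate_add_apply, Nat.sub_add_cancel (by omega)]
  rw [hin]
  exact mk_mem_periodicPts (Nat.sub_pos_of_lt hlt) (hper.apply_iterate _)

theorem iterate_add_factorial_card {n : ℕ} (hn : Fintype.card α ≤ n) :
    f^[n + (Fintype.card α).factorial] x = f^[n] x := by
  rw [add_comm, iterate_add_apply]
  exact isPeriodicPt_factorial_card_of_mem_periodicPts (iterate_mem_periodicPts_of_card_le f x hn)

end Function

theorem Nat.exists_not_and_succ_of_le {p : ℕ → Prop} {a b : ℕ} (hab : a ≤ b) (ha : ¬p a)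
    (hb : p b) : ∃ n, a ≤ n ∧ ¬p n ∧ p (n + 1) := by
  induction b, hab using Nat.le_induction with
  | base => exact absurd hb ha
  | succ b hab ih =>
    by_cases hpb : p b
    · exact ih hpb
    · exact ⟨b, hab, hpb, hb⟩

theorem Nat.exists_not_and_succ_of_periodic {p : ℕ → Prop} {N P a b : ℕ} (hP : 0 < P)
    (hper : ∀ n, N ≤ n → (p (n + P) ↔ p n)) (hNb : N ≤ b) (ha : ¬p a) (hb : p b) :
    ∃ n, a ≤ n ∧ ¬p n ∧ p (n + 1) := by
  have hperm : ∀ c, p (b + c * P) := by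
    intro c
    induction c with
    | zero => simpa using hb
    | succ c ih => rwa [add_mul, one_mul, ← add_assoc, hper _ (by omega)]
  exact exists_not_and_succ_of_le (by nlinarith) ha (hperm a)

namespace DFA

variable {α σ : Type*} (M : DFA α σ)

theorem evalFrom_flatten_replicate (s : σ) (x : List α) (n : ℕ) :
    M.evalFrom s (List.replicate n x).flatten = (fun s => M.evalFrom s x)^[n] s := by
  induction n generalizing s with
  | zero => rfl
  | succ n ih =>
    rw [List.replicate_succ, List.flatten_cons, evalFrom_of_append, ih, Function.iterate_succ_apply]

theorem mem_accepts_pump_add_factorial_card_iff [Fintype σ] (ρ x τ : List α) {n : ℕ}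
    (hn : Fintype.card σ ≤ n) :
    ρ ++ (List.replicate (n + (Fintype.card σ).factorial) x).flatten ++ τ ∈ M.accepts ↔
      ρ ++ (List.replicate n x).flatten ++ τ ∈ M.accepts := by
  simp only [mem_accepts, eval, evalFrom_of_append, evalFrom_flatten_replicate,
    Function.iterate_add_factorial_card _ _ hn]

end DFA

theorem fourLegged_of_not_mem_of_succ_mem {A : Type*} {L : Set (List A)} (hred : Reduced L)
    {ρ σ τ : List A} (hσ : σ ≠ []) {n : ℕ}
    (hout : ρ ++ (List.replicate (n + 3) σ).flatten ++ τ ∉ L)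
    (hin : ρ ++ (List.replicate (n + 4) σ).flatten ++ τ ∈ L) : FourLegged L := by
  obtain ⟨x, σ', rfl⟩ := List.exists_cons_of_ne_nil hσ
  refine ⟨hred, x, ρ ++ x :: σ', σ' ++ (List.replicate (n + 2) (x :: σ')).flatten ++ τ,
    ρ ++ x :: σ' ++ x :: σ', σ' ++ (List.replicate (n + 1) (x :: σ')).flatten ++ τ,
    by simp, by simp [List.replicate_succ], by simp, by simp [List.replicate_succ], ?_, ?_, ?_⟩
  · simpa [List.replicate_succ] using hin
  · simpa [List.replicate_succ] using hin
  · simpa [List.replicate_succ] using hout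

theorem non_star_free_fourLegged {A : Type*} (L : Set (List A))
    (hreg : ∃ (S : Type) (_ : Fintype S) (M : DFA A S),
      (M.accepts : Set (List A)) = L)
    (hnsf : ∀ k : ℕ, 0 < k → ∃ (ρ σ τ : List A) (m : ℕ), k ≤ m ∧
      Xor' (ρ ++ (List.replicate k σ).flatten ++ τ ∈ L)
           (ρ ++ (List.replicate m σ).flatten ++ τ ∈ L))
    (hred : Reduced L) :
    FourLegged L := by
  obtain ⟨S, _, M, rfl⟩ := hreg
  obtain ⟨ρ, σ, τ, m, hkm, hxor⟩ := hnsf (Fintype.card S + 3) (by omega)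
  have hσ : σ ≠ [] := by
    rintro rfl
    rcases hxor with ⟨h, h'⟩ | ⟨h, h'⟩ <;> simp_all
  obtain ⟨a, b, ha, hb, hout, hin⟩ : ∃ a b, Fintype.card S + 3 ≤ a ∧ Fintype.card S + 3 ≤ b ∧
      ρ ++ (List.replicate a σ).flatten ++ τ ∉ M.accepts ∧
      ρ ++ (List.replicate b σ).flatten ++ τ ∈ M.accepts := by
    rcases hxor with ⟨hk, hm⟩ | ⟨hm, hk⟩
    exacts [⟨m, _, hkm, le_rfl, hm, hk⟩, ⟨_, m, le_rfl, hkm, hk, hm⟩]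
  obtain ⟨n, hn, hout, hin⟩ := Nat.exists_not_and_succ_of_periodic
    (p := fun j => ρ ++ (List.replicate j σ).flatten ++ τ ∈ M.accepts) (Nat.factorial_pos _)
    (fun n hn => M.mem_accepts_pump_add_factorial_card_iff ρ σ τ hn)
    (by omega : Fintype.card S ≤ b) hout hin
  obtain ⟨t, rfl⟩ : ∃ t, n = t + 3 := ⟨n - 3, by omega⟩
  exact fourLegged_of_not_mem_of_succ_mem hred hσ hout hin
end
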